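/- arXiv:1310.3377 — 2 statements merged into one kernel-verified Lean document; each statement's English description precedes it below -/
import Mathlib

section
/- Let b ∈ ℝ with b ≥ 2 or b ≤ 0. Then the function f_b(n, w) = n^{2-b} w^b is convex on the open set {(n,w) ∈ ℝ² : n > 0, w > 0}. -/
/-!
Write `f_b = g²` with `g(n, w) = n ^ q * w ^ (1 - q)`, `q = (2 - b) / 2`. The function `g` is
the perspective `w * (n / w) ^ q` of `t ↦ t ^ q`, which is convex when `q ≥ 1`; for `q ≤ 0` swap
the roles of `n` and `w`, since then `1 - q ≥ 1`. The square of a nonnegative convex function is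
convex.
-/

open Set

section Perspective

variable {E : Type*} [AddCommGroup E] [Module ℝ E]

lemma inv_smul_add_eq_add_smul_inv_smul {x₁ x₂ : E} {t₁ t₂ a c : ℝ} (ht₁ : t₁ ≠ 0)
    (ht₂ : t₂ ≠ 0) (hT : a * t₁ + c * t₂ ≠ 0) :
    (a * t₁ + c * t₂)⁻¹ • (a • x₁ + c • x₂) =
      (a * t₁ / (a * t₁ + c * t₂)) • (t₁⁻¹ • x₁) + (c * t₂ / (a * t₁ + c * t₂)) • (t₂⁻¹ • x₂) := by
  match_scalars <;> field_simp

theorem ConvexOn.perspective {s : Set E} {φ : E → ℝ} (hφ : ConvexOn ℝ s φ) :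
    ConvexOn ℝ {p : E × ℝ | 0 < p.2 ∧ p.2⁻¹ • p.1 ∈ s} (fun p => p.2 * φ (p.2⁻¹ • p.1)) := by
  set D := {p : E × ℝ | 0 < p.2 ∧ p.2⁻¹ • p.1 ∈ s}
  have H : ∀ p ∈ D, ∀ p' ∈ D, ∀ a c : ℝ, 0 ≤ a → 0 ≤ c → a + c = 1 →
      a • p + c • p' ∈ D ∧ (a • p + c • p').2 * φ ((a • p + c • p').2⁻¹ • (a • p + c • p').1) ≤
        a • (p.2 * φ (p.2⁻¹ • p.1)) + c • (p'.2 * φ (p'.2⁻¹ • p'.1)) := by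
    rintro ⟨x₁, t₁⟩ ⟨ht₁, hx₁⟩ ⟨x₂, t₂⟩ ⟨ht₂, hx₂⟩ a c ha hc hac
    simp only [Prod.smul_mk, Prod.mk_add_mk, smul_eq_mul, D, mem_ofPred_eq] at hx₁ hx₂ ⊢
    have hT : 0 < a * t₁ + c * t₂ := by
      rcases ha.lt_or_eq with ha' | rfl
      · positivity
      · simp_all
    rw [inv_smul_add_eq_add_smul_inv_smul ht₁.ne' ht₂.ne' hT.ne']
    have hw : a * t₁ / (a * t₁ + c * t₂) + c * t₂ / (a * t₁ + c * t₂) = 1 := by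
      field_simp
    refine ⟨⟨hT, hφ.1 hx₁ hx₂ (by positivity) (by positivity) hw⟩, ?_⟩
    calc (a * t₁ + c * t₂) * φ ((a * t₁ / (a * t₁ + c * t₂)) • t₁⁻¹ • x₁ +
            (c * t₂ / (a * t₁ + c * t₂)) • t₂⁻¹ • x₂)
        ≤ (a * t₁ + c * t₂) * ((a * t₁ / (a * t₁ + c * t₂)) * φ (t₁⁻¹ • x₁) +
            (c * t₂ / (a * t₁ + c * t₂)) * φ (t₂⁻¹ • x₂)) :=
          mul_le_mul_of_nonneg_left (hφ.2 hx₁ hx₂ (by positivity) (by positivity) hw) hT.le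
      _ = a * (t₁ * φ (t₁⁻¹ • x₁)) + c * (t₂ * φ (t₂⁻¹ • x₂)) := by
          field_simp
  exact ⟨fun p hp p' hp' a c ha hc hac => (H p hp p' hp' a c ha hc hac).1,
    fun p hp p' hp' a c ha hc hac => (H p hp p' hp' a c ha hc hac).2⟩

end Perspective

lemma convex_pos_quadrant : Convex ℝ {p : ℝ × ℝ | 0 < p.1 ∧ 0 < p.2} :=
  (convex_Ioi 0).prod (convex_Ioi 0)

lemma convexOn_rpow_mul_rpow_one_sub_of_one_le {q : ℝ} (hq : 1 ≤ q) :
    ConvexOn ℝ {p : ℝ × ℝ | 0 < p.1 ∧ 0 < p.2} (fun p => p.1 ^ q * p.2 ^ (1 - q)) := by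
  refine ((convexOn_rpow hq).perspective.subset
    (fun p hp => ⟨hp.2, smul_nonneg (inv_pos.2 hp.2).le hp.1.le⟩) convex_pos_quadrant).congr ?_
  rintro ⟨n, w⟩ ⟨hn, hw⟩
  simp only [smul_eq_mul]
  rw [Real.mul_rpow (inv_pos.2 hw).le hn.le, Real.inv_rpow hw.le, Real.rpow_sub hw, Real.rpow_one]
  field_simp

theorem convexOn_rpow_mul_rpow_one_sub {q : ℝ} (hq : 1 ≤ q ∨ q ≤ 0) :
    ConvexOn ℝ {p : ℝ × ℝ | 0 < p.1 ∧ 0 < p.2} (fun p => p.1 ^ q * p.2 ^ (1 - q)) := by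
  rcases hq with hq | hq
  · exact convexOn_rpow_mul_rpow_one_sub_of_one_le hq
  · have hswap := (convexOn_rpow_mul_rpow_one_sub_of_one_le (q := 1 - q)
      (by linarith)).comp_linearMap (LinearEquiv.prodComm ℝ ℝ ℝ).toLinearMap
    refine (hswap.subset (fun p hp => ⟨hp.2, hp.1⟩) convex_pos_quadrant).congr fun p _ => ?_
    simp [mul_comm]

theorem fb_convex (b : ℝ) (hb : 2 ≤ b ∨ b ≤ 0) :
    ConvexOn ℝ {p : ℝ × ℝ | 0 < p.1 ∧ 0 < p.2}
      (fun p : ℝ × ℝ => p.1 ^ (2 - b) * p.2 ^ b) := by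
  have hg := convexOn_rpow_mul_rpow_one_sub (q := (2 - b) / 2)
    (hb.symm.imp (fun _ => by linarith) (fun _ => by linarith))
  have hg_nonneg : ∀ ⦃p : ℝ × ℝ⦄, p ∈ {p : ℝ × ℝ | 0 < p.1 ∧ 0 < p.2} →
      0 ≤ p.1 ^ ((2 - b) / 2) * p.2 ^ (1 - (2 - b) / 2) :=
    fun p hp => mul_nonneg (Real.rpow_nonneg hp.1.le _) (Real.rpow_nonneg hp.2.le _)
  refine (hg.pow hg_nonneg 2).congr ?_
  rintro ⟨n, w⟩ ⟨hn, hw⟩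
  simp only [Pi.pow_apply]
  rw [mul_pow, ← Real.rpow_natCast, ← Real.rpow_natCast, ← Real.rpow_mul hn.le,
    ← Real.rpow_mul hw.le]
  ring_nf
end

section
/- Let κ > 0 and let (x_j)_{j≥0} be a sequence of nonnegative real numbers satisfying x_j + κ x_j² ≤ x_{j-1} for all j ≥ 1. Then for every j ∈ ℕ, x_j ≤ x_0 / (1 + κ x_0 j / (1 + 2κ x_0)). -/
/-!
The map `t ↦ t + κ t²` is strictly increasing on `[0, ∞)`, so a sequence with
`x_j + κ x_j² ≤ x_{j-1}` stays below any nonnegative sequence `y` with `y_0 = x_0` and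
`y_{j-1} ≤ y_j + κ y_j²`. The bound `y_j = x_0 / (1 + κ x_0 j / (1 + 2κ x_0))` is such a
supersolution: `1 / y_j` is an arithmetic progression with step `δ = κ / (1 + 2κ x_0)`, and for
`u = 1 / y_{j-1} ≥ 1 / x_0` the supersolution inequality reduces to `δ (u + δ) ≤ κ u`.
-/

namespace Nonlinear

theorem le_of_map_le_of_le_map {α : Type*} [LinearOrder α] {f : α → α} {s : Set α}
    (hf : StrictMonoOn f s) {x y : ℕ → α} (hxs : ∀ j, x j ∈ s) (hys : ∀ j, y j ∈ s)
    (hx : ∀ j, f (x (j + 1)) ≤ x j) (hy : ∀ j, y j ≤ f (y (j + 1))) (h₀ : x 0 ≤ y 0) :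
    ∀ j, x j ≤ y j
  | 0 => h₀
  | j + 1 => (hf.le_iff_le (hxs _) (hys _)).1 <|
      (hx j).trans <| (le_of_map_le_of_le_map hf hxs hys hx hy h₀ j).trans (hy j)

theorem strictMonoOn_add_mul_sq {κ : ℝ} (hκ : 0 ≤ κ) :
    StrictMonoOn (fun t : ℝ => t + κ * t ^ 2) (Set.Ici 0) := by
  intro s hs t ht hst
  simp only [Set.mem_Ici] at hs ht
  nlinarith [mul_nonneg hκ (add_nonneg hs ht)]

theorem inv_le_inv_add_mul_inv_sq {κ u δ : ℝ} (hu : 0 < u) (hδ : 0 ≤ δ)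
    (h : δ * (u + δ) ≤ κ * u) : u⁻¹ ≤ (u + δ)⁻¹ + κ * (u + δ)⁻¹ ^ 2 := by
  have huδ : 0 < u + δ := by linarith
  rw [inv_pow, ← div_eq_mul_inv, ← sub_le_iff_le_add', inv_sub_inv hu.ne' huδ.ne',
    div_le_div_iff₀ (by positivity) (by positivity)]
  nlinarith

noncomputable def gronwallBarrier (κ b : ℝ) (j : ℕ) : ℝ :=
  b / (1 + κ * b * j / (1 + 2 * κ * b))

theorem gronwallBarrier_nonneg {κ b : ℝ} (hκ : 0 ≤ κ) (hb : 0 ≤ b) (j : ℕ) :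
    0 ≤ gronwallBarrier κ b j := by
  unfold gronwallBarrier; positivity

theorem gronwallBarrier_le_succ_add_mul_sq {κ b : ℝ} (hκ : 0 ≤ κ) (hb : 0 ≤ b) (j : ℕ) :
    gronwallBarrier κ b j ≤
      gronwallBarrier κ b (j + 1) + κ * gronwallBarrier κ b (j + 1) ^ 2 := by
  rcases hb.eq_or_lt with rfl | hb
  · simp [gronwallBarrier]
  have hc : 0 < 1 + 2 * κ * b := by positivity
  have hform : ∀ n : ℕ,
      gronwallBarrier κ b n = (b⁻¹ + n * (κ / (1 + 2 * κ * b)))⁻¹ := by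
    intro n
    unfold gronwallBarrier
    field_simp
  set c := 1 + 2 * κ * b
  set u := b⁻¹ + j * (κ / c)
  rw [hform, hform, Nat.cast_succ, add_one_mul, ← add_assoc]
  refine inv_le_inv_add_mul_inv_sq (by positivity) (by positivity) ?_
  have hδ : κ / c ≤ 2 * κ * b * u := calc
    κ / c ≤ κ := div_le_self hκ (le_add_of_nonneg_right (by positivity))
    _ ≤ 2 * κ * b * b⁻¹ := by rw [mul_assoc, mul_inv_cancel₀ hb.ne']; linarith
    _ ≤ 2 * κ * b * u := by gcongr; exact le_add_of_nonneg_right (by positivity)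
  calc κ / c * (u + κ / c) ≤ κ / c * (c * u) := by gcongr; linarith
    _ = κ * u := by field_simp

theorem discrete_gronwall (κ : ℝ) (hκ : 0 < κ) (x : ℕ → ℝ)
    (hx : ∀ j, 0 ≤ x j) (hrec : ∀ j : ℕ, 1 ≤ j → x j + κ * x j ^ 2 ≤ x (j - 1)) :
    ∀ j : ℕ, x j ≤ x 0 / (1 + κ * x 0 * j / (1 + 2 * κ * x 0)) :=
  le_of_map_le_of_le_map (strictMonoOn_add_mul_sq hκ.le) hx
    (gronwallBarrier_nonneg hκ.le (hx 0)) (fun j => hrec (j + 1) j.succ_pos)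
    (gronwallBarrier_le_succ_add_mul_sq hκ.le (hx 0)) (by simp)
end Nonlinear
end
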